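/- For every s ∈ ℂ, every integer r > 0, and all polynomials f, g ∈ ℂ[x], the pullback of the 2-cocycle C of glbar along φ_s is given by the finite sum: Tr( [J, φ_s(t^r f(D))] · φ_s(t^{−r} g(D)) ) = Σ_{j=1}^{r} f(s−j) g(s+r−j); moreover Tr( [J, φ_s(t^r f(D))] · φ_s(t^{s'} g(D)) ) = 0 whenever r + s' ≠ 0. -/
import Mathlib


open Polynomial

/-- `glbar`: matrices over `ℂ` indexed by `ℤ × ℤ` with only finitely many
nonzero diagonals. -/
def HasFinDiags (A : ℤ → ℤ → ℂ) : Prop :=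
  ∃ S : Finset ℤ, ∀ i j : ℤ, j - i ∉ S → A i j = 0

/-- The matrix product `(AB)_{ij} = Σ_{k ∈ ℤ} a_{ik} b_{kj}`. -/
noncomputable def matMul (A B : ℤ → ℤ → ℂ) : ℤ → ℤ → ℂ :=
  fun i j => ∑ᶠ k : ℤ, A i k * B k j

/-- The commutator `[X,Y] = XY - YX`. -/
noncomputable def matBr (X Y : ℤ → ℤ → ℂ) : ℤ → ℤ → ℂ :=
  matMul X Y - matMul Y X

/-- The diagonal matrix `J` with `J_{ii} = 1` for `i ≤ 0` and `J_{ii} = 0`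
for `i > 0`. -/
noncomputable def Jmat : ℤ → ℤ → ℂ :=
  fun i j => if i = j ∧ i ≤ 0 then 1 else 0

/-- The trace: sum of the diagonal entries. -/
noncomputable def matTr (X : ℤ → ℤ → ℂ) : ℂ :=
  ∑ᶠ i : ℤ, X i i

/-- The 2-cocycle `C(A,B) = Tr([J,A]B)`. -/
noncomputable def Ccoc (A B : ℤ → ℤ → ℂ) : ℂ :=
  matTr (matMul (matBr Jmat A) B)

/-- `𝒟 = ⊕_{k∈ℤ} ℂ[x]`; `tᵏ f(D)` is `Finsupp.single k f`. -/
abbrev Dcal : Type := ℤ →₀ Polynomial ℂ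

/-- `φ_s(tᵏ f(D))` is the matrix whose `(j-k, j)` entry is `f(s-j)`, all
other entries `0`. -/
noncomputable def phi (s : ℂ) (u : Dcal) : ℤ → ℤ → ℂ :=
  fun i j => (u (j - i)).eval (s - j)

noncomputable def chiZ (i : ℤ) : ℂ := if i ≤ 0 then 1 else 0

lemma phi_single_apply (s : ℂ) (k : ℤ) (f : Polynomial ℂ) (i j : ℤ) :
    phi s (Finsupp.single k f) i j = if j - i = k then f.eval (s - j) else 0 := by
  simp only [phi, Finsupp.single_apply]
  rcases eq_or_ne (j - i) k with h | h
  · simp [h]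
  · simp [h, Ne.symm h]

lemma br_apply (s : ℂ) (r : ℤ) (f : Polynomial ℂ) (i j : ℤ) :
    matBr Jmat (phi s (Finsupp.single r f)) i j
      = (chiZ i - chiZ j) * phi s (Finsupp.single r f) i j := by
  have h1 : matMul Jmat (phi s (Finsupp.single r f)) i j
      = chiZ i * phi s (Finsupp.single r f) i j := by
    unfold matMul
    rw [finsum_eq_single _ i]
    · simp [Jmat, chiZ]
    · intro k hk
      simp [Jmat, Ne.symm hk]
  have h2 : matMul (phi s (Finsupp.single r f)) Jmat i j
      = phi s (Finsupp.single r f) i j * chiZ j := by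
    unfold matMul
    rw [finsum_eq_single _ j]
    · simp [Jmat, chiZ]
    · intro k hk
      simp [Jmat, hk]
  show matMul Jmat _ i j - matMul _ Jmat i j = _
  rw [h1, h2]; ring

lemma diag_entry (s : ℂ) (r : ℤ) (f g : Polynomial ℂ) (s' : ℤ) (i : ℤ) :
    matMul (matBr Jmat (phi s (Finsupp.single r f))) (phi s (Finsupp.single s' g)) i i
      = (chiZ i - chiZ (i + r)) * f.eval (s - (i + r)) *
        (if -r = s' then g.eval (s - i) else 0) := by
  unfold matMul
  rw [finsum_eq_single _ (i + r)]
  · rw [br_apply, phi_single_apply, phi_single_apply]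
    have : i + r - i = r := by ring
    rw [this, if_pos rfl]
    have : i - (i + r) = -r := by ring
    rw [this]
    push_cast
    ring
  · intro k hk
    rw [br_apply, phi_single_apply]
    have : ¬ (k - i = r) := by omega
    rw [if_neg this]
    ring

/-- Pullback of the cocycle `C` along `φ_s`: for `r > 0`,
`Tr([J, φ_s(tʳ f(D))]·φ_s(t⁻ʳ g(D))) = Σ_{j=1}^{r} f(s-j) g(s+r-j)`, and
`Tr([J, φ_s(tʳ f(D))]·φ_s(t^{s'} g(D))) = 0` whenever `r + s' ≠ 0`. -/
theorem Ccoc_pullback (s : ℂ) (r : ℤ) (hr : 0 < r) (f g : Polynomial ℂ) :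
    Ccoc (phi s (Finsupp.single r f)) (phi s (Finsupp.single (-r) g)) =
      ∑ j ∈ Finset.range r.toNat,
        f.eval (s - ((j : ℂ) + 1)) * g.eval (s + (r : ℂ) - ((j : ℂ) + 1)) ∧
    ∀ s' : ℤ, r + s' ≠ 0 →
      Ccoc (phi s (Finsupp.single r f)) (phi s (Finsupp.single s' g)) = 0 := by
  constructor
  · unfold Ccoc matTr
    have hdiag : ∀ i : ℤ,
        matMul (matBr Jmat (phi s (Finsupp.single r f)))
          (phi s (Finsupp.single (-r) g)) i i
        = (chiZ i - chiZ (i + r)) * (f.eval (s - (i + r)) * g.eval (s - i)) := by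
      intro i
      rw [diag_entry, if_pos rfl]; ring
    have hsupp : (Function.support fun i : ℤ =>
        matMul (matBr Jmat (phi s (Finsupp.single r f)))
          (phi s (Finsupp.single (-r) g)) i i) ⊆ ↑(Finset.Icc (1 - r) 0) := by
      intro i hi
      simp only [Function.mem_support] at hi
      rw [hdiag] at hi
      by_contra hmem
      simp only [Finset.coe_Icc, Set.mem_Icc, not_and_or, not_le] at hmem
      apply hi
      have : chiZ i - chiZ (i + r) = 0 := by
        unfold chiZ
        rcases hmem with h | h
        · rw [if_pos (by omega), if_pos (by omega)]; ring
        · rw [if_neg (by omega), if_neg (by omega)]; ring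
      rw [this]; ring
    rw [finsum_eq_finset_sum_of_support_subset _ hsupp]
    rw [Finset.sum_congr rfl (fun i _ => hdiag i)]
    refine Finset.sum_nbij' (fun i => (i + r - 1).toNat) (fun j => (j : ℤ) + 1 - r)
      ?_ ?_ ?_ ?_ ?_
    · intro i hi
      simp only [Finset.mem_Icc] at hi
      simp only [Finset.mem_range]
      omega
    · intro j hj
      simp only [Finset.mem_range] at hj
      simp only [Finset.mem_Icc]
      omega
    · intro i hi
      simp only [Finset.mem_Icc] at hi
      show ((i + r - 1).toNat : ℤ) + 1 - r = i
      omega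
    · intro j hj
      simp only [Finset.mem_range] at hj
      show (((j : ℤ) + 1 - r) + r - 1).toNat = j
      omega
    · intro i hi
      simp only [Finset.mem_Icc] at hi
      have h1 : chiZ i = 1 := by unfold chiZ; rw [if_pos (by omega)]
      have h2 : chiZ (i + r) = 0 := by unfold chiZ; rw [if_neg (by omega)]
      have hcast : (((i + r - 1).toNat : ℕ) : ℂ) = (i : ℂ) + (r : ℂ) - 1 := by
        have : ((i + r - 1).toNat : ℤ) = i + r - 1 := Int.toNat_of_nonneg (by omega)
        calc (((i + r - 1).toNat : ℕ) : ℂ) = (((i + r - 1).toNat : ℤ) : ℂ) := by push_cast; ring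
        _ = ((i + r - 1 : ℤ) : ℂ) := by rw [this]
        _ = (i : ℂ) + (r : ℂ) - 1 := by push_cast; ring
      rw [h1, h2, hcast]
      ring_nf
  · intro s' hs'
    unfold Ccoc matTr
    have hdiag : ∀ i : ℤ,
        matMul (matBr Jmat (phi s (Finsupp.single r f)))
          (phi s (Finsupp.single s' g)) i i = 0 := by
      intro i
      rw [diag_entry, if_neg (by omega)]; ring
    rw [finsum_congr hdiag, finsum_zero]
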